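/- Let F_∞/F be a ℤ_p-extension with layers F_n, A an abelian variety of dimension d over F, and S a finite set of places of F containing the places above p, the places of bad reduction of A, and the archimedean places, such that all finite places in S decompose finitely in F_∞/F. Then |r_p(R_S(A[p]/F_n)) − r_p(R(A/F_n))| = O(1); more precisely it is bounded by 4d + 2d|S_f(F_n)|. -/

import Mathlib

/-- The `p`-torsion subgroup `N[p]` of an abelian group `N`. -/
def pTors (p : ℕ) (N : Type*) [AddCommGroup N] : AddSubgroup N where
  carrier := {x | p • x = 0}
  zero_mem' := smul_zero p
  add_mem' := by
    intro a b ha hb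
    simp only [Set.mem_setOf_eq, smul_add] at *
    rw [ha, hb, add_zero]
  neg_mem' := by
    intro a ha
    simp only [Set.mem_setOf_eq, smul_neg] at *
    rw [ha, neg_zero]

/-- The `p`-rank `r_p(N) = dim_{𝔽_p} N[p]`: since `N[p]` is an elementary abelian
`p`-group, its `𝔽_p`-dimension is `log_p` of its cardinality. -/
noncomputable def pRank (p : ℕ) (N : Type*) [AddCommGroup N] : ℕ :=
  Nat.log p (Nat.card (pTors p N))

/-- Multiplication by `p` as an additive group homomorphism. -/
def pMul (p : ℕ) (N : Type*) [AddCommGroup N] : N →+ N :=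
  AddMonoidHom.mk' (fun x => p • x) fun a b => smul_add p a b

/-- The multiplicative group structure (composition) on `AddAut M`, which Mathlib used to
provide and has since replaced by an additive group structure. -/
instance AddAut.compGroupOld (M : Type*) [Add M] : Group (AddAut M) where
  mul g h := AddEquiv.trans h g
  one := AddEquiv.refl _
  inv := AddEquiv.symm
  mul_assoc _ _ _ := rfl
  one_mul _ := rfl
  mul_one _ := rfl
  inv_mul_cancel := AddEquiv.self_trans_symm
section Cohomology

variable {G : Type*} [Group G] {M : Type*} [AddCommGroup M]

/-- 1-cocycles of `G` with coefficients in `M`, for the action `ρ`. -/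
def cocycles (ρ : G →* AddAut M) : AddSubgroup (G → M) where
  carrier := {f | ∀ g h : G, f (g * h) = f g + ρ g (f h)}
  zero_mem' := by intro g h; simp
  add_mem' := by
    intro a b ha hb g h
    simp only [Pi.add_apply, ha g h, hb g h, map_add]
    abel
  neg_mem' := by
    intro a ha g h
    simp only [Pi.neg_apply, ha g h, map_neg]
    abel

/-- 1-coboundaries inside the 1-cocycles. -/
def coboundaries (ρ : G →* AddAut M) : AddSubgroup ↥(cocycles ρ) where
  carrier := {f | ∃ m : M, ∀ g : G, (f : G → M) g = ρ g m - m}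
  zero_mem' := ⟨0, by simp⟩
  add_mem' := by
    rintro a b ⟨m, hm⟩ ⟨m', hm'⟩
    refine ⟨m + m', fun g => ?_⟩
    simp only [AddSubgroup.coe_add, Pi.add_apply, hm g, hm' g, map_add]
    abel
  neg_mem' := by
    rintro a ⟨m, hm⟩
    refine ⟨-m, fun g => ?_⟩
    simp only [AddSubgroup.coe_neg, Pi.neg_apply, hm g, map_neg]
    abel

/-- First group cohomology `H¹(G, M)` (cocycles modulo coboundaries). -/
abbrev H1 (ρ : G →* AddAut M) := ↥(cocycles ρ) ⧸ coboundaries ρ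

/-- Restriction of 1-cocycles to a subgroup `H ≤ G`. -/
def resCocycle (ρ : G →* AddAut M) (H : Subgroup G) :
    ↥(cocycles ρ) →+ ↥(cocycles (ρ.comp H.subtype)) where
  toFun f := ⟨fun h => (f : G → M) h, fun g h => f.2 g.1 h.1⟩
  map_zero' := rfl
  map_add' _ _ := rfl

/-- The restriction map `H¹(G, M) → H¹(H, M)`. -/
def resH1 (ρ : G →* AddAut M) (H : Subgroup G) :
    H1 ρ →+ H1 (ρ.comp H.subtype) :=
  QuotientAddGroup.map _ _ (resCocycle ρ H) (by
    rintro f ⟨m, hm⟩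
    exact ⟨m, fun g => hm g.1⟩)

/-- The fine Selmer group attached to the local conditions given by the family of
subgroups `D i` (the decomposition subgroups at the places `i ∈ S`): the kernel of the
localization map `H¹(G, M) → ∏_{i ∈ S} H¹(D i, M)`. -/
def fineSelmer (ρ : G →* AddAut M) {ι : Type*} (D : ι → Subgroup G) :
    AddSubgroup (H1 ρ) :=
  ⨅ i, (resH1 ρ (D i)).ker

/-- The invariants `M^G`. -/
def invar (ρ : G →* AddAut M) : AddSubgroup M where
  carrier := {m | ∀ g, ρ g m = m}
  zero_mem' := fun g => map_zero _
  add_mem' := fun ha hb g => by rw [map_add, ha g, hb g]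
  neg_mem' := fun ha g => by rw [map_neg, ha g]

end Cohomology
/-- The discrete abelian group `ℚ_p/ℤ_p`. -/
abbrev QpZp (p : ℕ) [Fact p.Prime] : Type :=
  ℚ_[p] ⧸ (AddMonoidHom.range (PadicInt.Coe.ringHom (p := p)).toAddMonoidHom)

/-!
Let `φ : H¹(G, A[p]) → H¹(G, A[p^∞])` be induced by the inclusion. Since `A[p^∞]` is
`p`-divisible with `p`-torsion `A[p]`, the image of `φ` is `H¹(G, A[p^∞])[p]`, and its kernel
embeds in `A[p^∞]^G / p`, of order at most `|A[p^∞][p]| = p^{2d}`; the same holds for the local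
maps `φ_v`. On `Z = φ⁻¹(R(A))`, `φ` maps onto `R(A)[p]` with kernel `ker φ`, while `R_S(A[p])`
is the kernel of the localization `Z → ∏_v ker φ_v`. Hence
`|R(A)[p]| · |ker φ| = |Z| = q · |R_S(A[p])|` with `q ≤ p^{2d|S_f|}`, and taking `log_p`
(`R_S(A[p])` is killed by `p`) bounds the difference of `p`-ranks by `2d + 2d|S_f|`.
With `Nat.card` of an infinite group being `0`, these identities also cover infinite groups,
whose `p`-rank is `0` by the same convention.
-/

theorem Nat.log_le_add_log_of_le_pow_mul {b r x y : ℕ} (h : x ≤ b ^ r * y) :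
    Nat.log b x ≤ r + Nat.log b y := by
  have := Nat.log_mono_right (b := b) (Nat.div_le_of_le_mul h)
  rw [Nat.log_div_base_pow] at this
  omega

theorem card_le_of_forall_finset_card_le {Q : Type*} {c : ℕ} (h : ∀ s : Finset Q, s.card ≤ c) :
    Nat.card Q ≤ c := by
  cases finite_or_infinite Q
  · have := Fintype.ofFinite Q
    simpa [Nat.card_eq_fintype_card] using h Finset.univ
  · simp

theorem finite_of_forall_finset_card_le {Q : Type*} {c : ℕ} (h : ∀ s : Finset Q, s.card ≤ c) :
    Finite Q := by
  by_contra hQ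
  have : Infinite Q := not_finite_iff_infinite.mp hQ
  obtain ⟨s, hs⟩ := Infinite.exists_subset_card_eq Q (c + 1)
  have := h s
  omega

section pTorsion

variable {p : ℕ} {N : Type*} [AddCommGroup N]

theorem mem_pTors {x : N} : x ∈ pTors p N ↔ p • x = 0 := Iff.rfl

theorem pTors_le_of_dvd {a b : ℕ} (hab : a ∣ b) : pTors a N ≤ pTors b N := by
  obtain ⟨c, rfl⟩ := hab
  intro x hx
  rw [mem_pTors, mul_nsmul, mem_pTors.mp hx, nsmul_zero]

theorem pRank_eq_log_card (hN : ∀ x : N, p • x = 0) : pRank p N = Nat.log p (Nat.card N) := by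
  rw [pRank, show pTors p N = ⊤ from eq_top_iff.mpr fun x _ => hN x, AddSubgroup.card_top]

theorem card_quotient_range_pMul [Finite N] :
    Nat.card (N ⧸ (pMul p N).range) = Nat.card (pTors p N) := by
  have hrange := (pMul p N).range.card_mul_index
  have hker := (pMul p N).ker.card_mul_index
  rw [AddSubgroup.index_ker, ← hrange, mul_comm] at hker
  exact (Nat.eq_of_mul_eq_mul_left Nat.card_pos hker).symm

variable {N' : Type*} [AddCommGroup N']

def pTorsMap (p : ℕ) (f : N →+ N') : pTors p N →+ pTors p N' :=
  (f.comp (pTors p N).subtype).codRestrict (pTors p N') fun x => by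
    rw [mem_pTors, AddMonoidHom.comp_apply, ← map_nsmul, AddSubgroup.coe_subtype,
      mem_pTors.mp x.2, map_zero]

theorem pTorsMap_injective {f : N →+ N'} (hf : Function.Injective f) :
    Function.Injective (pTorsMap p f) := fun _ _ hxy =>
  Subtype.ext (hf (congrArg Subtype.val hxy :))

theorem finite_pTors_of_injective [Finite (pTors p N')] {f : N →+ N'}
    (hf : Function.Injective f) : Finite (pTors p N) :=
  Finite.of_injective _ (pTorsMap_injective hf)

theorem card_pTors_le_of_injective [Finite (pTors p N')] {f : N →+ N'}
    (hf : Function.Injective f) : Nat.card (pTors p N) ≤ Nat.card (pTors p N') :=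
  Nat.card_le_card_of_injective _ (pTorsMap_injective hf)

theorem finite_pTors_pow [Finite (pTors p N)] (m : ℕ) : Finite (pTors (p ^ m) N) := by
  induction m with
  | zero =>
    have : Subsingleton (pTors (p ^ 0) N) := ⟨fun x y => Subtype.ext <| by
      rw [← one_nsmul x.1, ← one_nsmul y.1]
      exact x.2.trans y.2.symm⟩
    infer_instance
  | succ m ih =>
    let f : pTors (p ^ (m + 1)) N →+ pTors (p ^ m) N :=
      ((pMul p N).comp (pTors (p ^ (m + 1)) N).subtype).codRestrict _ fun x => by
        rw [mem_pTors, AddMonoidHom.comp_apply, pMul, AddMonoidHom.mk'_apply, smul_smul,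
          ← pow_succ, AddSubgroup.coe_subtype, mem_pTors.mp x.2]
    have : Finite f.ker :=
      Finite.of_injective (fun x : f.ker => (⟨x.1.1, congrArg Subtype.val x.2⟩ : pTors p N))
        fun x y hxy => Subtype.ext (Subtype.ext (congrArg Subtype.val hxy :))
    exact f.finite_iff_finite_ker_range.mpr ⟨this, inferInstance⟩

/-- Any finite family in `W / pW` comes from `V / pV` for a finite `V = W[p^m]`, and
`|V / pV| = |V[p]| ≤ |N[p]|`. -/
theorem card_finset_quotient_range_pMul_le [Finite (pTors p N)]
    (htors : ∀ y : N, ∃ m, p ^ m • y = 0) (W : AddSubgroup N)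
    (s : Finset (W ⧸ (pMul p W).range)) : s.card ≤ Nat.card (pTors p N) := by
  classical
  choose ord hord using htors
  choose w hw using QuotientAddGroup.mk_surjective (s := (pMul p W).range)
  set m := s.sup fun x => ord (w x)
  let V := pTors (p ^ m) W
  have hwV (x : W ⧸ (pMul p W).range) (hx : x ∈ s) : w x ∈ V :=
    Subtype.ext <| pTors_le_of_dvd (pow_dvd_pow p (Finset.le_sup (f := fun x => ord (w x)) hx))
      (hord (w x))
  have : Finite (pTors p W) := finite_pTors_of_injective W.subtype_injective
  have : Finite V := finite_pTors_pow m
  have := Fintype.ofFinite (V ⧸ (pMul p V).range)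
  let g : V ⧸ (pMul p V).range →+ W ⧸ (pMul p W).range :=
    QuotientAddGroup.map _ _ V.subtype <| by
      rintro _ ⟨v, rfl⟩
      exact ⟨v, rfl⟩
  have hsurj : Set.SurjOn g (Finset.univ : Finset (V ⧸ (pMul p V).range)) s := fun x hx =>
    ⟨QuotientAddGroup.mk (⟨w x, hwV x hx⟩ : V), by simp, hw x⟩
  calc s.card ≤ (Finset.univ : Finset (V ⧸ (pMul p V).range)).card :=
        Finset.card_le_card_of_surjOn g hsurj
    _ = Nat.card (pTors p V) := by
        rw [Finset.card_univ, ← Nat.card_eq_fintype_card, card_quotient_range_pMul]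
    _ ≤ Nat.card (pTors p N) :=
        card_pTors_le_of_injective (f := W.subtype.comp V.subtype)
          (W.subtype_injective.comp V.subtype_injective)

end pTorsion

section Functoriality

variable {G : Type*} [Group G] {M N : Type*} [AddCommGroup M] [AddCommGroup N]

def mapCocycles (ρ : G →* AddAut M) (σ : G →* AddAut N) (e : M →+ N)
    (he : ∀ g x, e (ρ g x) = σ g (e x)) : cocycles ρ →+ cocycles σ where
  toFun f := ⟨fun g => e (f.1 g), fun g h => by
    change e _ = e _ + _
    rw [f.2 g h, map_add, he]⟩
  map_zero' := Subtype.ext <| funext fun _ => map_zero e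
  map_add' f f' := Subtype.ext <| funext fun _ => map_add e _ _

def mapH1 (ρ : G →* AddAut M) (σ : G →* AddAut N) (e : M →+ N)
    (he : ∀ g x, e (ρ g x) = σ g (e x)) : H1 ρ →+ H1 σ :=
  QuotientAddGroup.map _ _ (mapCocycles ρ σ e he) <| by
    rintro f ⟨m, hm⟩
    exact ⟨e m, fun g => by
      change e _ = _
      rw [hm g, map_sub, he]⟩

variable {ρ : G →* AddAut M} {σ : G →* AddAut N} {e : M →+ N}

theorem mapH1_mk (he : ∀ g x, e (ρ g x) = σ g (e x)) (f : cocycles ρ) :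
    mapH1 ρ σ e he f = (mapCocycles ρ σ e he f : H1 σ) := rfl

theorem resH1_mapH1 (he : ∀ g x, e (ρ g x) = σ g (e x)) (H : Subgroup G) (c : H1 ρ) :
    resH1 σ H (mapH1 ρ σ e he c) =
      mapH1 (ρ.comp H.subtype) (σ.comp H.subtype) e (fun g => he g) (resH1 ρ H c) := by
  induction c using QuotientAddGroup.induction_on
  rfl

variable {p : ℕ}

theorem nsmul_H1_eq_zero (hM : ∀ x : M, p • x = 0) (c : H1 ρ) : p • c = 0 := by
  induction c using QuotientAddGroup.induction_on with
  | H f =>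
    have hf : p • f = 0 := Subtype.ext <| funext fun g => by
      change p • f.1 g = 0
      exact hM _
    rw [← QuotientAddGroup.mk_nsmul, hf, QuotientAddGroup.mk_zero]

theorem nsmul_eq_zero_of_range_eq_pTors (hinj : Function.Injective e)
    (hrange : e.range = pTors p N) (x : M) : p • x = 0 :=
  hinj <| by rw [map_nsmul, map_zero, ← mem_pTors, ← hrange]; exact ⟨x, rfl⟩

end Functoriality

section KernelAndImage

variable {G : Type*} [Group G] {M N : Type*} [AddCommGroup M] [AddCommGroup N]
  {ρ : G →* AddAut M} {σ : G →* AddAut N} {e : M →+ N} {p : ℕ}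

theorem exists_cocycle_of_mem_ker_mapH1 (he : ∀ g x, e (ρ g x) = σ g (e x)) {c : H1 ρ}
    (hc : c ∈ (mapH1 ρ σ e he).ker) :
    ∃ f : cocycles ρ, ∃ m : N, (f : H1 ρ) = c ∧ ∀ g, e (f.1 g) = σ g m - m := by
  obtain ⟨f, rfl⟩ := QuotientAddGroup.mk_surjective c
  rw [AddMonoidHom.mem_ker, mapH1_mk, QuotientAddGroup.eq_zero_iff] at hc
  obtain ⟨m, hm⟩ := hc
  exact ⟨f, m, rfl, hm⟩

theorem nsmul_mem_invar_of_coboundary (hM : ∀ x : M, p • x = 0) {f : G → M} {m : N}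
    (hfm : ∀ g, e (f g) = σ g m - m) : p • m ∈ invar σ := fun g => by
  have h : p • (σ g m - m) = 0 := by rw [← hfm g, ← map_nsmul, hM, map_zero]
  rwa [smul_sub, sub_eq_zero, ← map_nsmul] at h

/-- Injectivity of `[f] ↦ p • m` (for `e ∘ f = ∂m`) on the kernel of `H¹(G, M) → H¹(G, N)`. -/
theorem mk_eq_mk_of_nsmul_sub_eq (hinj : Function.Injective e)
    (he : ∀ g x, e (ρ g x) = σ g (e x)) (hrange : e.range = pTors p N)
    {f f' : cocycles ρ} {m m' u : N} (hfm : ∀ g, e (f.1 g) = σ g m - m)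
    (hfm' : ∀ g, e (f'.1 g) = σ g m' - m') (hu : u ∈ invar σ) (h : p • u = p • m - p • m') :
    (f : H1 ρ) = f' := by
  have ht : m - m' - u ∈ e.range := by
    rw [hrange, mem_pTors, smul_sub, smul_sub, h, sub_self]
  obtain ⟨z, hz⟩ := ht
  rw [QuotientAddGroup.eq_iff_sub_mem]
  refine ⟨z, fun g => hinj ?_⟩
  change e (f.1 g - f'.1 g) = e (ρ g z - z)
  rw [map_sub, map_sub, hfm, hfm', he, hz, map_sub, map_sub, hu g]
  abel

theorem exists_injective_ker_mapH1 (hinj : Function.Injective e)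
    (he : ∀ g x, e (ρ g x) = σ g (e x)) (hrange : e.range = pTors p N) :
    ∃ δ : (mapH1 ρ σ e he).ker → invar σ ⧸ (pMul p (invar σ)).range, Function.Injective δ := by
  have hM := nsmul_eq_zero_of_range_eq_pTors hinj hrange
  choose f m hfc hfm using fun c : (mapH1 ρ σ e he).ker => exists_cocycle_of_mem_ker_mapH1 he c.2
  refine ⟨fun c => QuotientAddGroup.mk ⟨p • m c, nsmul_mem_invar_of_coboundary hM (hfm c)⟩,
    fun c c' hcc' => Subtype.ext ?_⟩
  obtain ⟨u, hu⟩ := QuotientAddGroup.eq_iff_sub_mem.mp hcc'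
  rw [← hfc c, ← hfc c']
  exact mk_eq_mk_of_nsmul_sub_eq hinj he hrange (hfm c) (hfm c') u.2 (congrArg Subtype.val hu)

theorem finite_ker_mapH1 [Finite (pTors p N)] (htors : ∀ y : N, ∃ m, p ^ m • y = 0)
    (hinj : Function.Injective e) (he : ∀ g x, e (ρ g x) = σ g (e x))
    (hrange : e.range = pTors p N) : Finite (mapH1 ρ σ e he).ker :=
  have := finite_of_forall_finset_card_le (card_finset_quotient_range_pMul_le htors (invar σ))
  have ⟨_, hδ⟩ := exists_injective_ker_mapH1 hinj he hrange
  Finite.of_injective _ hδ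

theorem card_ker_mapH1_le [Finite (pTors p N)] (htors : ∀ y : N, ∃ m, p ^ m • y = 0)
    (hinj : Function.Injective e) (he : ∀ g x, e (ρ g x) = σ g (e x))
    (hrange : e.range = pTors p N) : Nat.card (mapH1 ρ σ e he).ker ≤ Nat.card (pTors p N) :=
  have hbound := card_finset_quotient_range_pMul_le htors (invar σ)
  have := finite_of_forall_finset_card_le hbound
  have ⟨_, hδ⟩ := exists_injective_ker_mapH1 hinj he hrange
  (Nat.card_le_card_of_injective _ hδ).trans (card_le_of_forall_finset_card_le hbound)

/-- Since `N` is `p`-divisible, a cocycle `f` with `p • f = ∂(p • m')` differs from `∂m'` by a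
cocycle with values in `N[p] = e(M)`. -/
theorem exists_mapH1_eq_of_nsmul_eq_zero (hinj : Function.Injective e)
    (he : ∀ g x, e (ρ g x) = σ g (e x)) (hrange : e.range = pTors p N)
    (hdiv : ∀ y : N, ∃ z, p • z = y) {c : H1 σ} (hc : p • c = 0) :
    ∃ b : H1 ρ, mapH1 ρ σ e he b = c := by
  obtain ⟨f, rfl⟩ := QuotientAddGroup.mk_surjective c
  rw [← QuotientAddGroup.mk_nsmul, QuotientAddGroup.eq_zero_iff] at hc
  obtain ⟨m, hm⟩ := hc
  obtain ⟨m', rfl⟩ := hdiv m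
  have hk (g : G) : f.1 g - (σ g m' - m') ∈ e.range := by
    have : p • f.1 g = σ g (p • m') - p • m' := hm g
    rw [hrange, mem_pTors, smul_sub, smul_sub, this, map_nsmul, sub_self]
  choose z hz using hk
  have hzc : z ∈ cocycles ρ := fun g h => hinj <| by
    rw [map_add, he, hz, hz, hz, f.2 g h, map_sub, map_sub, map_mul,
      show (σ g * σ h) m' = σ g (σ h m') from rfl]
    abel
  refine ⟨(⟨z, hzc⟩ : cocycles ρ), ?_⟩
  rw [mapH1_mk, QuotientAddGroup.eq_iff_sub_mem]
  refine ⟨-m', fun g => ?_⟩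
  change e (z g) - f.1 g = _
  rw [hz, map_neg]
  abel

theorem range_mapH1 (hinj : Function.Injective e) (he : ∀ g x, e (ρ g x) = σ g (e x))
    (hrange : e.range = pTors p N) (hdiv : ∀ y : N, ∃ z, p • z = y) :
    (mapH1 ρ σ e he).range = pTors p (H1 σ) := by
  ext c
  refine ⟨?_, fun hc => exists_mapH1_eq_of_nsmul_eq_zero hinj he hrange hdiv hc⟩
  rintro ⟨b, rfl⟩
  rw [mem_pTors, ← map_nsmul,
    nsmul_H1_eq_zero (nsmul_eq_zero_of_range_eq_pTors hinj hrange), map_zero]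

end KernelAndImage

section Counting

variable {p : ℕ} {A B : Type*} [AddCommGroup A] [AddCommGroup B]

theorem card_comap_eq_card_pTors_mul_card_ker {φ : A →+ B} (hφ : φ.range = pTors p B)
    (Y : AddSubgroup B) : Nat.card (Y.comap φ) = Nat.card (pTors p Y) * Nat.card φ.ker := by
  set Z := Y.comap φ
  let θ : Z →+ pTors p Y :=
    ((φ.comp Z.subtype).codRestrict Y fun z => z.2).codRestrict _ fun z => Subtype.ext <| by
      change p • φ z = 0
      rw [← mem_pTors, ← hφ]
      exact ⟨z, rfl⟩
  have hθ : Function.Surjective θ := by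
    rintro ⟨⟨y, hyY⟩, hy⟩
    obtain ⟨a, rfl⟩ : y ∈ φ.range := by rw [hφ, mem_pTors]; exact congrArg Subtype.val hy
    exact ⟨⟨a, hyY⟩, rfl⟩
  have hker : θ.ker = φ.ker.addSubgroupOf Z := by
    ext z
    simp only [AddMonoidHom.mem_ker, AddSubgroup.mem_addSubgroupOf]
    exact ⟨fun h => congrArg (fun y : pTors p Y => (y : B)) h, fun h => Subtype.ext (Subtype.ext h)⟩
  have hφZ : φ.ker ≤ Z := fun x hx => by
    rw [AddMonoidHom.mem_ker] at hx
    rw [AddSubgroup.mem_comap, hx]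
    exact Y.zero_mem
  rw [θ.ker.card_eq_card_quotient_mul_card_addSubgroup,
    Nat.card_congr (QuotientAddGroup.quotientKerEquivOfSurjective θ hθ).toEquiv, hker,
    Nat.card_congr (AddSubgroup.addSubgroupOfEquivOfLe hφZ).toEquiv]

theorem exists_card_comap_iInf_ker_eq_mul {ι : Type*} {A' B' : ι → Type*}
    [∀ i, AddCommGroup (A' i)] [∀ i, AddCommGroup (B' i)] (φ : A →+ B)
    (φ' : ∀ i, A' i →+ B' i) (a : ∀ i, A →+ A' i) (b : ∀ i, B →+ B' i)
    (hcomm : ∀ i x, b i (φ x) = φ' i (a i x)) [Finite (∀ i, (φ' i).ker)] :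
    ∃ q, q ≠ 0 ∧ q ≤ Nat.card (∀ i, (φ' i).ker) ∧
      Nat.card ((⨅ i, (b i).ker).comap φ) = q * Nat.card (⨅ i, (a i).ker : AddSubgroup A) := by
  set X : AddSubgroup A := ⨅ i, (a i).ker
  set Z := (⨅ i, (b i).ker).comap φ
  have hZ (z : Z) (i : ι) : a i z ∈ (φ' i).ker := by
    have hz : φ z ∈ ⨅ i, (b i).ker := z.2
    rw [AddSubgroup.mem_iInf] at hz
    rw [AddMonoidHom.mem_ker, ← hcomm, ← AddMonoidHom.mem_ker]
    exact hz i
  let loc : Z →+ ∀ i, (φ' i).ker :=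
    AddMonoidHom.pi fun i => ((a i).comp Z.subtype).codRestrict _ fun z => hZ z i
  have hXZ : X ≤ Z := fun x hx => by
    simp only [X, AddSubgroup.mem_iInf, AddMonoidHom.mem_ker] at hx
    simp only [Z, AddSubgroup.mem_comap, AddSubgroup.mem_iInf, AddMonoidHom.mem_ker, hcomm, hx,
      map_zero, implies_true]
  have hker : loc.ker = X.addSubgroupOf Z := by
    ext z
    simp only [AddMonoidHom.mem_ker, AddSubgroup.mem_addSubgroupOf, X, AddSubgroup.mem_iInf,
      funext_iff, Subtype.ext_iff]
    rfl
  have : Finite (Z ⧸ loc.ker) := Finite.of_injective _ (QuotientAddGroup.kerLift_injective loc)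
  refine ⟨Nat.card (Z ⧸ loc.ker), Nat.card_pos.ne',
    Nat.card_le_card_of_injective _ (QuotientAddGroup.kerLift_injective loc), ?_⟩
  rw [loc.ker.card_eq_card_quotient_mul_card_addSubgroup, hker,
    Nat.card_congr (AddSubgroup.addSubgroupOfEquivOfLe hXZ).toEquiv]

theorem card_pi_le_pow {ι : Type*} [Finite ι] {β : ι → Type*} {c : ℕ}
    (h : ∀ i, Nat.card (β i) ≤ c) : Nat.card (∀ i, β i) ≤ c ^ Nat.card ι := by
  have := Fintype.ofFinite ι
  rw [Nat.card_pi, Nat.card_eq_fintype_card, ← Finset.card_univ]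
  exact Finset.prod_le_pow_card _ _ _ fun i _ => h i

theorem abs_pRank_sub_pRank_le_of_card_mul_eq {X Y : Type*} [AddCommGroup X] [AddCommGroup Y]
    (hX : ∀ x : X, p • x = 0) {k q r s : ℕ} (h : Nat.card (pTors p Y) * k = q * Nat.card X)
    (hk0 : k ≠ 0) (hk : k ≤ p ^ r) (hq0 : q ≠ 0) (hq : q ≤ p ^ s) :
    |(pRank p X : ℤ) - pRank p Y| ≤ r + s := by
  have hXY : Nat.card X ≤ p ^ r * Nat.card (pTors p Y) :=
    calc Nat.card X ≤ q * Nat.card X := Nat.le_mul_of_pos_left _ (Nat.pos_of_ne_zero hq0)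
      _ = Nat.card (pTors p Y) * k := h.symm
      _ ≤ p ^ r * Nat.card (pTors p Y) := by rw [mul_comm]; gcongr
  have hYX : Nat.card (pTors p Y) ≤ p ^ s * Nat.card X :=
    calc Nat.card (pTors p Y) ≤ Nat.card (pTors p Y) * k :=
          Nat.le_mul_of_pos_right _ (Nat.pos_of_ne_zero hk0)
      _ = q * Nat.card X := h
      _ ≤ p ^ s * Nat.card X := by gcongr
  have h₁ := Nat.log_le_add_log_of_le_pow_mul hXY
  have h₂ := Nat.log_le_add_log_of_le_pow_mul hYX
  rw [pRank_eq_log_card hX, pRank, abs_le]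
  omega

end Counting

theorem abs_pRank_fineSelmer_sub_le {p : ℕ} {G : Type*} [Group G] {ι : Type*} [Finite ι]
    (D : ι → Subgroup G) {M N : Type*} [AddCommGroup M] [AddCommGroup N]
    {ρ : G →* AddAut M} {σ : G →* AddAut N} {e : M →+ N} (hinj : Function.Injective e)
    (he : ∀ g x, e (ρ g x) = σ g (e x)) (hrange : e.range = pTors p N)
    (hdiv : ∀ y : N, ∃ z, p • z = y) (htors : ∀ y : N, ∃ m, p ^ m • y = 0)
    [Finite (pTors p N)] {r : ℕ} (hr : Nat.card (pTors p N) ≤ p ^ r) :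
    |(pRank p (fineSelmer ρ D) : ℤ) - pRank p (fineSelmer σ D)| ≤ r + r * Nat.card ι := by
  have hM := nsmul_eq_zero_of_range_eq_pTors hinj hrange
  let φ' (i : ι) := mapH1 (ρ.comp (D i).subtype) (σ.comp (D i).subtype) e fun g => he g
  have (i : ι) : Finite (φ' i).ker := finite_ker_mapH1 htors hinj _ hrange
  have : Finite (mapH1 ρ σ e he).ker := finite_ker_mapH1 htors hinj he hrange
  obtain ⟨q, hq0, hq, hZX⟩ := exists_card_comap_iInf_ker_eq_mul (mapH1 ρ σ e he) φ'
    (fun i => resH1 ρ (D i)) (fun i => resH1 σ (D i)) fun i => resH1_mapH1 he (D i)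
  have hZY := card_comap_eq_card_pTors_mul_card_ker (range_mapH1 hinj he hrange hdiv)
    (fineSelmer σ D)
  have hX (x : fineSelmer ρ D) : p • x = 0 :=
    Subtype.ext <| (AddSubgroup.coe_nsmul _ x p).trans (nsmul_H1_eq_zero hM (x : H1 ρ))
  refine abs_pRank_sub_pRank_le_of_card_mul_eq hX (hZY.symm.trans hZX) Nat.card_pos.ne'
    ((card_ker_mapH1_le htors hinj he hrange).trans hr) hq0 (hq.trans ?_)
  rw [pow_mul]
  exact card_pi_le_pow fun i => (card_ker_mapH1_le htors hinj _ hrange).trans hr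

theorem exists_pow_nsmul_eq_zero_pi {p : ℕ} {ι : Type*} [Finite ι] {β : ι → Type*}
    [∀ i, AddCommGroup (β i)] (h : ∀ i (y : β i), ∃ m, p ^ m • y = 0) (y : ∀ i, β i) :
    ∃ m, p ^ m • y = 0 := by
  have := Fintype.ofFinite ι
  choose m hm using fun i => h i (y i)
  exact ⟨Finset.univ.sup m, funext fun i =>
    pTors_le_of_dvd (pow_dvd_pow p (Finset.le_sup (Finset.mem_univ i))) (hm i)⟩

theorem card_pTors_eq_of_range_eq {p : ℕ} {M N : Type*} [AddCommGroup M] [AddCommGroup N]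
    {e : M →+ N} (hinj : Function.Injective e) (hrange : e.range = pTors p N) :
    Nat.card (pTors p N) = Nat.card M := by
  rw [← hrange]
  exact Nat.card_congr (AddMonoidHom.ofInjective hinj).toEquiv.symm

namespace QpZp

variable (p : ℕ) [Fact p.Prime]

noncomputable instance divisibleBy : DivisibleBy (QpZp p) ℕ :=
  letI := AddGroup.divisibleByNatOfDivisibleByInt ℚ_[p]
  inferInstance

theorem exists_pow_nsmul_eq_zero (y : QpZp p) : ∃ m : ℕ, p ^ m • y = 0 := by
  obtain ⟨q, rfl⟩ := QuotientAddGroup.mk_surjective y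
  obtain ⟨m, hm⟩ := pow_unbounded_of_one_lt ‖q‖
    (by exact_mod_cast (Fact.out : p.Prime).one_lt : (1 : ℝ) < p)
  refine ⟨m, ?_⟩
  rw [← QuotientAddGroup.mk_nsmul, QuotientAddGroup.eq_zero_iff]
  refine ⟨⟨p ^ m • q, ?_⟩, rfl⟩
  rw [nsmul_eq_mul, norm_mul, Nat.cast_pow, norm_pow, Padic.norm_p, inv_pow]
  exact inv_mul_le_one_of_le₀ hm.le (by positivity)

end QpZp

/-- `G n` is `G_S(F_n)`, `ι n` is `S_f(F_n)` with decomposition groups `D n i`, `rhoInf n` and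
`rhoP n` are the actions on `A[p^∞] ≅ (ℚ_p/ℤ_p)^{2d}` and `A[p] ≅ (ℤ/p)^{2d}`, and `emb n` is the
inclusion `A[p] ↪ A[p^∞]`. -/
theorem pRank_pFineSelmer_sub_fineSelmer_bounded_general (p : ℕ) [Fact p.Prime]
    (d : ℕ)
    (G : ℕ → Type) [∀ n, Group (G n)]
    (ι : ℕ → Type) [∀ n, Finite (ι n)]
    (D : ∀ n, ι n → Subgroup (G n))
    (rhoInf : ∀ n, G n →* AddAut (Fin (2 * d) → QpZp p))
    (rhoP : ∀ n, G n →* AddAut (Fin (2 * d) → ZMod p))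
    (emb : ∀ _ : ℕ, (Fin (2 * d) → ZMod p) →+ (Fin (2 * d) → QpZp p))
    (hinj : ∀ n, Function.Injective (emb n))
    (hequiv : ∀ n (g : G n) x, emb n (rhoP n g x) = rhoInf n g (emb n x))
    (hrange : ∀ n, (emb n).range = pTors p (Fin (2 * d) → QpZp p))
    (hbd : ∃ B, ∀ n, Nat.card (ι n) ≤ B) :
    (∀ n, |(pRank p ↥(fineSelmer (rhoP n) (D n)) : ℤ)
            - pRank p ↥(fineSelmer (rhoInf n) (D n))|
          ≤ 4 * d + 2 * d * Nat.card (ι n)) ∧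
    ∃ Cst : ℕ, ∀ n, |(pRank p ↥(fineSelmer (rhoP n) (D n)) : ℤ)
            - pRank p ↥(fineSelmer (rhoInf n) (D n))| ≤ Cst := by
  have hp : p ≠ 0 := (Fact.out : p.Prime).ne_zero
  have hdiv (y : Fin (2 * d) → QpZp p) : ∃ z, p • z = y :=
    ⟨DivisibleBy.div y p, DivisibleBy.div_cancel y hp⟩
  have htors :=
    exists_pow_nsmul_eq_zero_pi (ι := Fin (2 * d)) fun _ => QpZp.exists_pow_nsmul_eq_zero p
  have hbound (n : ℕ) : |(pRank p ↥(fineSelmer (rhoP n) (D n)) : ℤ)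
      - pRank p ↥(fineSelmer (rhoInf n) (D n))| ≤ 4 * d + 2 * d * Nat.card (ι n) := by
    have hcard := card_pTors_eq_of_range_eq (hinj n) (hrange n)
    rw [Nat.card_fun, Nat.card_zmod, Nat.card_fin] at hcard
    have : Finite (pTors p (Fin (2 * d) → QpZp p)) := Nat.finite_of_card_ne_zero <| by
      rw [hcard]; exact pow_ne_zero _ hp
    have := abs_pRank_fineSelmer_sub_le (D n) (hinj n) (hequiv n) (hrange n) hdiv htors hcard.le
    push_cast at this
    linarith
  obtain ⟨B, hB⟩ := hbd
  refine ⟨hbound, 4 * d + 2 * d * B, fun n => (hbound n).trans ?_⟩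
  have := hB n
  push_cast
  gcongr

/-- Let `F_∞/F` be a `ℤ_p`-extension with layers `F_n` and `A` a
`d`-dimensional abelian variety; `S` contains the places above `p`, the bad-reduction
places and the archimedean places, and the finite places of `S` decompose finitely in
`F_∞/F`.  Below, for each `n`: `G n` stands for `G_S(F_n)`, `ι n` for `S_f(F_n)`
(of bounded cardinality), `D n i` for the decomposition subgroups, `rhoInf n` for the
action on `A[p^∞] ≅ (ℚ_p/ℤ_p)^{2d}`, `rhoP n` for the action on `A[p] ≅ (ℤ/p)^{2d}`,
and `emb n` for the `G n`-equivariant inclusion `A[p] ↪ A[p^∞]`.  Then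
`|r_p(R_S(A[p]/F_n)) − r_p(R(A/F_n))| ≤ 4d + 2d·|S_f(F_n)| = O(1)`. -/
theorem pRank_pFineSelmer_sub_fineSelmer_bounded (p : ℕ) [Fact p.Prime] (hodd : Odd p)
    (d : ℕ)
    (G : ℕ → Type) [∀ n, Group (G n)]
    (ι : ℕ → Type) [∀ n, Finite (ι n)]
    (D : ∀ n, ι n → Subgroup (G n))
    (rhoInf : ∀ n, G n →* AddAut (Fin (2 * d) → QpZp p))
    (rhoP : ∀ n, G n →* AddAut (Fin (2 * d) → ZMod p))
    (emb : ∀ _ : ℕ, (Fin (2 * d) → ZMod p) →+ (Fin (2 * d) → QpZp p))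
    (hinj : ∀ n, Function.Injective (emb n))
    (hequiv : ∀ n (g : G n) x, emb n (rhoP n g x) = rhoInf n g (emb n x))
    (hrange : ∀ n, (emb n).range = pTors p (Fin (2 * d) → QpZp p))
    (hbd : ∃ B, ∀ n, Nat.card (ι n) ≤ B) :
    (∀ n, |(pRank p ↥(fineSelmer (rhoP n) (D n)) : ℤ)
            - pRank p ↥(fineSelmer (rhoInf n) (D n))|
          ≤ 4 * d + 2 * d * Nat.card (ι n)) ∧
    ∃ Cst : ℕ, ∀ n, |(pRank p ↥(fineSelmer (rhoP n) (D n)) : ℤ)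
            - pRank p ↥(fineSelmer (rhoInf n) (D n))| ≤ Cst :=
  pRank_pFineSelmer_sub_fineSelmer_bounded_general p d G ι D rhoInf rhoP emb hinj hequiv hrange hbd
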